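/- Let X be a real Banach space, let a < b be reals, I = [a,b], let φ : X → ℝ be continuous and linear, and let ψ : X → ℝ be Lipschitz continuous with Lipschitz constant L. Let α, β : [a,b] → ℝ be continuous, C¹ on (a,b), with α'(λ) ≠ 0 for all λ ∈ (a,b) and g := β'/α' strictly monotone on (a,b), and assume either (i3) g increasing on (a,b) and α'(λ)ψ(x) < 0 for all λ ∈ (a,b) and x with ψ(x) ≠ 0, or (i4) g decreasing on (a,b) and α'(λ)ψ(x) > 0 for all λ ∈ (a,b) and x with ψ(x) ≠ 0. Finally assume that the set D := { λ ∈ [a,b] : |β(λ)|·L < |α(λ)|·‖φ‖_{X*} } is dense in [a,b]. Then, with h : ℝ → [a,b] defined as in Theorem 1.1 (h(μ) = g⁻¹(μ) for μ ∈ g((a,b)), h(μ) = a if (μ ≤ inf g and (i3)) or (μ ≥ sup g and (i4)), h(μ) = b otherwise), one has: Φ(x) = α(h(−φ(x)/ψ(x)))φ(x) + β(h(−φ(x)/ψ(x)))ψ(x) for every x with ψ(x) ≠ 0; Φ(x) = max{α(a)φ(x), α(b)φ(x)} for every x with ψ(x) = 0; and inf_{x∈X} Φ(x) = sup_{λ∈[a,b]\D}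 inf_{x∈X} ( α(λ)φ(x) + β(λ)ψ(x) ). -/

import Mathlib

/-!
For fixed `x`, the derivative of `λ ↦ α λ * φ x + β λ * ψ x` on `(a, b)` is
`α' λ * ψ x * (g λ + φ x / ψ x)` when `ψ x ≠ 0`, and `α' λ * φ x` otherwise. By the monotonicity
of `g` and the sign condition on `α' ψ` (resp. by Darboux's theorem for `α'`) it changes sign at
most once, from `+` to `-`, at `h (-(φ x / ψ x))` (resp. at `a` or `b`). So the function increases
up to that point and decreases after it: this gives the formula for `Φ`, and it makes every such
function quasiconcave in `λ`.

For `λ ∈ D` the linear part of `x ↦ α λ * φ x + β λ * ψ x` dominates its Lipschitz part, so this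
map decreases at a uniform rate along a fixed direction: it is unbounded below and its strict
sublevel sets are path connected. Suppose `inf Φ > r` while every `λ ∉ D` has partial infimum
`< r`. The superlevel sets `{λ | r ≤ α λ * φ x + β λ * ψ x}` are nonempty compact intervals. If
they pairwise meet, they share a point (Helly on the line), where the partial infimum is `< r`.
Otherwise some `d ∈ D` lies strictly between two of them, those of `x₁` and `x₂`. The sublevel set
`{α d * φ + β d * ψ < r}` is connected and contains `x₁` and `x₂`; by quasiconcavity it is covered
by the open sets where the map is `< r` on all of `[d, b]`, resp. `[a, d]`, which contain `x₁`,
resp. `x₂`. A point in both has `Φ < r`.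
-/

open Set Topology

lemma IsMaxOn.biSup_coe_eq {ι : Type*} {s : Set ι} {f : ι → ℝ} {c : ι} (h : IsMaxOn f s c)
    (hc : c ∈ s) : ⨆ l ∈ s, (f l : EReal) = f c :=
  le_antisymm (iSup₂_le fun _ hl => EReal.coe_le_coe_iff.2 (h hl)) (le_iSup₂_of_le c hc le_rfl)

section Unimodal

variable {f : ℝ → ℝ} {a b c : ℝ}

lemma isMaxOn_of_monotoneOn_of_antitoneOn (hc : c ∈ Icc a b) (hmono : MonotoneOn f (Icc a c))
    (hanti : AntitoneOn f (Icc c b)) : IsMaxOn f (Icc a b) c := by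
  intro l hl
  rcases le_total l c with hlc | hcl
  · exact hmono ⟨hl.1, hlc⟩ ⟨hc.1, le_rfl⟩ hlc
  · exact hanti ⟨le_rfl, hc.2⟩ ⟨hcl, hl.2⟩ hcl

lemma biSup_Icc_coe_eq_max (hab : a ≤ b) (hc : c = a ∨ c = b) (hmono : MonotoneOn f (Icc a c))
    (hanti : AntitoneOn f (Icc c b)) : ⨆ l ∈ Icc a b, (f l : EReal) = (max (f a) (f b) : ℝ) := by
  have hc' : c ∈ Icc a b := by
    rcases hc with rfl | rfl
    exacts [left_mem_Icc.2 hab, right_mem_Icc.2 hab]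
  have hmax := isMaxOn_of_monotoneOn_of_antitoneOn hc' hmono hanti
  rw [hmax.biSup_coe_eq hc']
  rcases hc with rfl | rfl
  · rw [max_eq_left (hmax (right_mem_Icc.2 hab))]
  · rw [max_eq_right (hmax (left_mem_Icc.2 hab))]

lemma quasiconcaveOn_of_monotoneOn_of_antitoneOn (hmono : MonotoneOn f (Icc a c))
    (hanti : AntitoneOn f (Icc c b)) : QuasiconcaveOn ℝ (Icc a b) f := by
  refine fun r => convex_iff_ordConnected.2 ⟨fun x hx y hy z hz =>
    ⟨⟨hx.1.1.trans hz.1, hz.2.trans hy.1.2⟩, ?_⟩⟩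
  rcases le_total z c with hzc | hcz
  · exact hx.2.trans (hmono ⟨hx.1.1, hz.1.trans hzc⟩ ⟨hx.1.1.trans hz.1, hzc⟩ hz.1)
  · exact hy.2.trans (hanti ⟨hcz, hz.2.trans hy.1.2⟩ ⟨hcz.trans hz.2, hy.1.2⟩ hz.2)

lemma monotoneOn_antitoneOn_of_hasDerivAt {f' : ℝ → ℝ} (hc : c ∈ Icc a b)
    (hf : ContinuousOn f (Icc a b)) (hf' : ∀ l ∈ Ioo a b, HasDerivAt f (f' l) l)
    (hleft : ∀ l ∈ Ioo a b, l < c → 0 ≤ f' l) (hright : ∀ l ∈ Ioo a b, c < l → f' l ≤ 0) :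
    MonotoneOn f (Icc a c) ∧ AntitoneOn f (Icc c b) := by
  constructor
  · refine monotoneOn_of_hasDerivWithinAt_nonneg (f' := f') (convex_Icc a c)
      (hf.mono (Icc_subset_Icc le_rfl hc.2)) (fun l hl => ?_) fun l hl => ?_ <;>
      rw [interior_Icc] at hl
    · exact (hf' l ⟨hl.1, hl.2.trans_le hc.2⟩).hasDerivWithinAt
    · exact hleft l ⟨hl.1, hl.2.trans_le hc.2⟩ hl.2
  · refine antitoneOn_of_hasDerivWithinAt_nonpos (f' := f') (convex_Icc c b)
      (hf.mono (Icc_subset_Icc hc.1 le_rfl)) (fun l hl => ?_) fun l hl => ?_ <;>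
      rw [interior_Icc] at hl
    · exact (hf' l ⟨hc.1.trans_lt hl.1, hl.2⟩).hasDerivWithinAt
    · exact hright l ⟨hc.1.trans_lt hl.1, hl.2⟩ hl.1

lemma StrictMonoOn.le_of_lt_and_le_of_gt {g : ℝ → ℝ} {μ : ℝ} (hgc : ContinuousOn g (Ioo a b))
    (hg : StrictMonoOn g (Ioo a b)) (hinv : μ ∈ g '' Ioo a b → c ∈ Ioo a b ∧ g c = μ)
    (ha : (∀ l ∈ Ioo a b, μ ≤ g l) → c = a) (hb : (∀ l ∈ Ioo a b, g l ≤ μ) → c = b)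
    {l : ℝ} (hl : l ∈ Ioo a b) : (l < c → g l ≤ μ) ∧ (c < l → μ ≤ g l) := by
  by_cases hμ : μ ∈ g '' Ioo a b
  · obtain ⟨hc, rfl⟩ := hinv hμ
    exact ⟨fun hlc => (hg hl hc hlc).le, fun hcl => (hg hc hl hcl).le⟩
  by_cases hbelow : ∀ l ∈ Ioo a b, μ ≤ g l
  · exact ⟨fun hlc => absurd (hlc.trans_eq (ha hbelow)) hl.1.not_gt, fun _ => hbelow l hl⟩
  by_cases habove : ∀ l ∈ Ioo a b, g l ≤ μ
  · exact ⟨fun _ => habove l hl, fun hcl => absurd ((hb habove).symm.trans_lt hcl) hl.2.not_gt⟩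
  push Not at hbelow habove
  obtain ⟨l₁, hl₁, hgl₁⟩ := hbelow
  obtain ⟨l₂, hl₂, hgl₂⟩ := habove
  have hsub : uIcc l₁ l₂ ⊆ Ioo a b := ordConnected_Ioo.uIcc_subset hl₁ hl₂
  obtain ⟨l₀, hl₀, rfl⟩ :=
    intermediate_value_uIcc (hgc.mono hsub) (mem_uIcc.2 (Or.inl ⟨hgl₁.le, hgl₂.le⟩))
  exact absurd ⟨l₀, hsub hl₀, rfl⟩ hμ

end Unimodal

section Envelope

variable {α β α' β' : ℝ → ℝ} {a b c : ℝ}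

lemma monotoneOn_antitoneOn_mul_add_mul {g : ℝ → ℝ} {p q : ℝ} (hq : q ≠ 0) (hc : c ∈ Icc a b)
    (hα : ContinuousOn α (Icc a b)) (hβ : ContinuousOn β (Icc a b))
    (hα' : ∀ l ∈ Ioo a b, HasDerivAt α (α' l) l) (hβ' : ∀ l ∈ Ioo a b, HasDerivAt β (β' l) l)
    (hα'0 : ∀ l ∈ Ioo a b, α' l ≠ 0) (hg : ∀ l ∈ Ioo a b, g l = β' l / α' l)
    (hgc : ContinuousOn g (Ioo a b)) (hinv : -(p / q) ∈ g '' Ioo a b → c ∈ Ioo a b ∧ g c = -(p / q))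
    (hcase :
      (StrictMonoOn g (Ioo a b) ∧ (∀ l ∈ Ioo a b, α' l * q < 0) ∧
        ((∀ l ∈ Ioo a b, -(p / q) ≤ g l) → c = a) ∧ ((∀ l ∈ Ioo a b, g l ≤ -(p / q)) → c = b)) ∨
      (StrictAntiOn g (Ioo a b) ∧ (∀ l ∈ Ioo a b, 0 < α' l * q) ∧
        ((∀ l ∈ Ioo a b, g l ≤ -(p / q)) → c = a) ∧ ((∀ l ∈ Ioo a b, -(p / q) ≤ g l) → c = b))) :
    MonotoneOn (fun l => α l * p + β l * q) (Icc a c) ∧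
      AntitoneOn (fun l => α l * p + β l * q) (Icc c b) := by
  have hfactor : ∀ l ∈ Ioo a b, α' l * p + β' l * q = α' l * q * (g l - -(p / q)) := by
    intro l hl
    rw [hg l hl]
    field_simp [hα'0 l hl]
    ring
  have hsign : ∀ l ∈ Ioo a b, (l < c → 0 ≤ α' l * q * (g l - -(p / q))) ∧
      (c < l → α' l * q * (g l - -(p / q)) ≤ 0) := by
    intro l hl
    rcases hcase with ⟨hmono, hneg, ha, hb⟩ | ⟨hanti, hpos, ha, hb⟩
    · obtain ⟨hleft, hright⟩ := hmono.le_of_lt_and_le_of_gt hgc hinv ha hb hl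
      exact ⟨fun h => mul_nonneg_of_nonpos_of_nonpos (hneg l hl).le (sub_nonpos.2 (hleft h)),
        fun h => mul_nonpos_of_nonpos_of_nonneg (hneg l hl).le (sub_nonneg.2 (hright h))⟩
    · obtain ⟨hleft, hright⟩ := hanti.neg.le_of_lt_and_le_of_gt (g := fun l => -g l) (μ := p / q)
        hgc.neg (fun ⟨l, hl, hgl⟩ => (hinv ⟨l, hl, by linarith⟩).imp_right fun h => by linarith)
        (fun h => ha fun l hl => by linarith [h l hl])
        (fun h => hb fun l hl => by linarith [h l hl]) hl
      exact ⟨fun h => mul_nonneg (hpos l hl).le (by linarith [hleft h]),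
        fun h => mul_nonpos_of_nonneg_of_nonpos (hpos l hl).le (by linarith [hright h])⟩
  refine monotoneOn_antitoneOn_of_hasDerivAt hc
    ((hα.mul continuousOn_const).add (hβ.mul continuousOn_const))
    (fun l hl => ((hα' l hl).mul_const p).add ((hβ' l hl).mul_const q))
    (fun l hl h => ?_) fun l hl h => ?_
  · exact hfactor l hl ▸ (hsign l hl).1 h
  · exact hfactor l hl ▸ (hsign l hl).2 h

lemma exists_monotoneOn_antitoneOn_mul (hab : a ≤ b) (hα : ContinuousOn α (Icc a b))
    (hα' : ∀ l ∈ Ioo a b, HasDerivAt α (α' l) l) (hα'0 : ∀ l ∈ Ioo a b, α' l ≠ 0) (p : ℝ) :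
    ∃ c, (c = a ∨ c = b) ∧ MonotoneOn (fun l => α l * p) (Icc a c) ∧
      AntitoneOn (fun l => α l * p) (Icc c b) := by
  have hpeak : ∀ c ∈ Icc a b, (∀ l ∈ Ioo a b, l < c → 0 ≤ α' l * p) →
      (∀ l ∈ Ioo a b, c < l → α' l * p ≤ 0) →
      MonotoneOn (fun l => α l * p) (Icc a c) ∧ AntitoneOn (fun l => α l * p) (Icc c b) :=
    fun c hc => monotoneOn_antitoneOn_of_hasDerivAt hc (hα.mul continuousOn_const)
      fun l hl => (hα' l hl).mul_const p
  have ha : a ∈ Icc a b := left_mem_Icc.2 hab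
  have hb : b ∈ Icc a b := right_mem_Icc.2 hab
  rcases hasDerivWithinAt_forall_lt_or_forall_gt_of_forall_ne (convex_Ioo a b)
    (fun l hl => (hα' l hl).hasDerivWithinAt) hα'0 with hneg | hpos <;>
    rcases le_total 0 p with hp | hp
  · exact ⟨a, .inl rfl, hpeak a ha (fun l hl h => absurd h hl.1.not_gt)
      fun l hl _ => mul_nonpos_of_nonpos_of_nonneg (hneg l hl).le hp⟩
  · exact ⟨b, .inr rfl, hpeak b hb (fun l hl _ => mul_nonneg_of_nonpos_of_nonpos (hneg l hl).le hp)
      fun l hl h => absurd h hl.2.not_gt⟩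
  · exact ⟨b, .inr rfl, hpeak b hb (fun l hl _ => mul_nonneg (hpos l hl).le hp)
      fun l hl h => absurd h hl.2.not_gt⟩
  · exact ⟨a, .inl rfl, hpeak a ha (fun l hl h => absurd h hl.1.not_gt)
      fun l hl _ => mul_nonpos_of_nonneg_of_nonpos (hpos l hl).le hp⟩

end Envelope

section Descent

variable {E : Type*} [NormedAddCommGroup E] [NormedSpace ℝ E]

lemma ContinuousLinearMap.exists_forall_add_smul_le (φ : E →L[ℝ] ℝ) {ψ : E → ℝ} {L : NNReal}
    (hψ : LipschitzWith L ψ) {s t : ℝ} (h : |t| * L < |s| * ‖φ‖) :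
    ∃ v : E, ∃ c > 0, ∀ x (τ : ℝ), 0 ≤ τ →
      s * φ (x + τ • v) + t * ψ (x + τ • v) ≤ s * φ x + t * ψ x - τ * c := by
  have hs : 0 < |s| :=
    pos_of_mul_pos_left ((mul_nonneg (abs_nonneg t) L.2).trans_lt h) (norm_nonneg φ)
  obtain ⟨u, hu, hφu⟩ := φ.exists_lt_apply_of_lt_opNorm ((div_lt_iff₀' hs).2 h)
  rw [div_lt_iff₀' hs, Real.norm_eq_abs, ← abs_mul] at hφu
  obtain ⟨v, hv, hsv⟩ : ∃ v : E, ‖v‖ ≤ 1 ∧ s * φ v = -|s * φ u| := by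
    rcases le_or_gt 0 (s * φ u) with hsu | hsu
    · exact ⟨-u, by simpa using hu.le, by simp [abs_of_nonneg hsu]⟩
    · exact ⟨u, hu.le, by simp [abs_of_neg hsu]⟩
  refine ⟨v, |s * φ u| - |t| * L, by linarith, fun x τ hτ => ?_⟩
  have hφ : s * φ (x + τ • v) = s * φ x - τ * |s * φ u| := by
    rw [map_add, map_smul, smul_eq_mul]
    linear_combination τ * hsv
  have hψ : t * ψ (x + τ • v) - t * ψ x ≤ |t| * (L * τ) := by
    have hdist : |ψ (x + τ • v) - ψ x| ≤ L * τ := by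
      have := hψ.dist_le_mul (x + τ • v) x
      rw [Real.dist_eq, dist_eq_norm, add_sub_cancel_left, norm_smul, Real.norm_eq_abs,
        abs_of_nonneg hτ] at this
      exact this.trans (mul_le_mul_of_nonneg_left (mul_le_of_le_one_right hτ hv) L.2)
    calc t * ψ (x + τ • v) - t * ψ x ≤ |t * (ψ (x + τ • v) - ψ x)| := by
          rw [← mul_sub]; exact le_abs_self _
      _ ≤ |t| * (L * τ) := by rw [abs_mul]; exact mul_le_mul_of_nonneg_left hdist (abs_nonneg t)
  linarith

variable {u : E → ℝ} {v : E} {c : ℝ}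

lemma exists_lt_of_forall_add_smul_le (hc : 0 < c)
    (hu : ∀ x (t : ℝ), 0 ≤ t → u (x + t • v) ≤ u x - t * c) (r : ℝ) : ∃ x, u x < r := by
  obtain ⟨n, hn⟩ := exists_nat_gt ((u 0 - r) / c)
  exact ⟨0 + (n : ℝ) • v, by linarith [hu 0 n n.cast_nonneg, (div_lt_iff₀ hc).1 hn]⟩

lemma isPreconnected_setOf_lt_of_forall_add_smul_le (hcont : Continuous u) (hc : 0 < c)
    (hu : ∀ x (t : ℝ), 0 ≤ t → u (x + t • v) ≤ u x - t * c) (r : ℝ) :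
    IsPreconnected {x | u x < r} := by
  rcases eq_empty_or_nonempty {x | u x < r} with hempty | hne
  · rw [hempty]; exact isPreconnected_empty
  refine (isPathConnected_iff.2 ⟨hne, fun x hx y hy => ?_⟩).isConnected.isPreconnected
  have hray : ∀ z, u z < r → ∀ T : ℝ, 0 ≤ T → segment ℝ z (z + T • v) ⊆ {x | u x < r} := by
    intro z hz T hT
    rw [segment_eq_image']
    rintro _ ⟨θ, hθ, rfl⟩
    simp only [mem_ofPred_eq, add_sub_cancel_left, smul_smul]
    nlinarith [hu z (θ * T) (mul_nonneg hθ.1 hT), mul_nonneg (mul_nonneg hθ.1 hT) hc.le]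
  have hcpt : IsCompact (segment ℝ x y) := by
    rw [segment_eq_image']; exact isCompact_Icc.image (by fun_prop)
  obtain ⟨M, hM⟩ := hcpt.bddAbove_image hcont.continuousOn
  obtain ⟨n, hn⟩ := exists_nat_gt ((M - r) / c)
  have hshift : segment ℝ (x + (n : ℝ) • v) (y + (n : ℝ) • v) ⊆ {x | u x < r} := by
    rw [segment_eq_image']
    rintro _ ⟨θ, hθ, rfl⟩
    have hz : x + θ • (y - x) ∈ segment ℝ x y := by rw [segment_eq_image']; exact ⟨θ, hθ, rfl⟩
    have e : x + (n : ℝ) • v + θ • (y + (n : ℝ) • v - (x + (n : ℝ) • v)) =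
        x + θ • (y - x) + (n : ℝ) • v := by module
    simp only [mem_ofPred_eq, e]
    linarith [hM ⟨_, hz, rfl⟩, hu (x + θ • (y - x)) n n.cast_nonneg, (div_lt_iff₀ hc).1 hn]
  exact ((JoinedIn.of_segment_subset (hray x hx n n.cast_nonneg)).trans
    (JoinedIn.of_segment_subset hshift)).trans
    (JoinedIn.of_segment_subset (hray y hy n n.cast_nonneg)).symm

lemma ContinuousLinearMap.exists_mul_add_mul_lt (φ : E →L[ℝ] ℝ) {ψ : E → ℝ} {L : NNReal}
    (hψ : LipschitzWith L ψ) {s t : ℝ} (h : |t| * L < |s| * ‖φ‖) (r : ℝ) :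
    ∃ x, s * φ x + t * ψ x < r :=
  let ⟨_, _, hc, hv⟩ := φ.exists_forall_add_smul_le hψ h
  exists_lt_of_forall_add_smul_le hc hv r

lemma ContinuousLinearMap.isPreconnected_setOf_mul_add_mul_lt (φ : E →L[ℝ] ℝ) {ψ : E → ℝ}
    {L : NNReal} (hψ : LipschitzWith L ψ) {s t : ℝ} (h : |t| * L < |s| * ‖φ‖) (r : ℝ) :
    IsPreconnected {x | s * φ x + t * ψ x < r} :=
  let ⟨_, _, hc, hv⟩ := φ.exists_forall_add_smul_le hψ h
  isPreconnected_setOf_lt_of_forall_add_smul_le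
    ((continuous_const.mul φ.continuous).add (continuous_const.mul hψ.continuous)) hc hv r

end Descent

lemma isOpen_setOf_forall_lt {X : Type*} [TopologicalSpace X] {f : ℝ → X → ℝ} {K : Set ℝ}
    (hK : IsCompact K) (hf : ContinuousOn (Function.uncurry f) (K ×ˢ univ)) (r : ℝ) :
    IsOpen {x | ∀ l ∈ K, f l x < r} := by
  refine isOpen_iff_eventually.2 fun x₀ hx₀ => hK.eventually_forall_of_forall_eventually
    (P := fun x l => l ∈ K → f l x < r) (fun l hl => ?_) |>.mono fun x hx l hl => hx l hl hl
  have hlt : ∀ᶠ p in 𝓝[K ×ˢ univ] (l, x₀), f p.1 p.2 < r :=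
    (hf (l, x₀) ⟨hl, trivial⟩).eventually (gt_mem_nhds (hx₀ l hl))
  rw [eventually_nhdsWithin_iff] at hlt
  exact (continuous_swap.tendsto (x₀, l)).eventually hlt |>.mono fun p hp hpK => hp ⟨hpK, trivial⟩

lemma exists_forall_mem_of_csInf_le_csSup {ι : Type*} [Nonempty ι] {s : ι → Set ℝ}
    (hne : ∀ i, (s i).Nonempty) (hcpt : ∀ i, IsCompact (s i)) (hconn : ∀ i, (s i).OrdConnected)
    (hle : ∀ i j, sInf (s i) ≤ sSup (s j)) : ∃ t, ∀ i, t ∈ s i := by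
  obtain ⟨j⟩ := ‹Nonempty ι›
  have hbdd : BddAbove (range fun i => sInf (s i)) := ⟨sSup (s j), forall_mem_range.2 (hle · j)⟩
  exact ⟨⨆ i, sInf (s i), fun i => (hconn i).out ((hcpt i).sInf_mem (hne i))
    ((hcpt i).sSup_mem (hne i)) ⟨le_ciSup hbdd i, ciSup_le (hle · i)⟩⟩

section Minimax

variable {X : Type*} [TopologicalSpace X] {f : ℝ → X → ℝ} {a b r : ℝ}

lemma exists_forall_lt_of_isPreconnected_setOf_lt {d : ℝ} (hd : d ∈ Icc a b)
    (hf : ContinuousOn (Function.uncurry f) (Icc a b ×ˢ univ))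
    (hqc : ∀ x, QuasiconcaveOn ℝ (Icc a b) (f · x)) (hconn : IsPreconnected {x | f d x < r})
    {x₁ x₂ : X} (hx₁ : ∀ l ∈ Icc d b, f l x₁ < r) (hx₂ : ∀ l ∈ Icc a d, f l x₂ < r) :
    ∃ x, ∀ l ∈ Icc a b, f l x < r := by
  have hopen : ∀ p q, a ≤ p → q ≤ b → IsOpen {x | ∀ l ∈ Icc p q, f l x < r} := fun p q hp hq =>
    isOpen_setOf_forall_lt isCompact_Icc (hf.mono (prod_mono (Icc_subset_Icc hp hq) subset_rfl)) r
  have hcover : {x | f d x < r} ⊆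
      {x | ∀ l ∈ Icc d b, f l x < r} ∪ {x | ∀ l ∈ Icc a d, f l x < r} := by
    intro x hx
    by_contra! h
    obtain ⟨⟨l₂, hl₂, h₂⟩, l₁, hl₁, h₁⟩ := by
      simpa only [mem_union, mem_ofPred_eq, not_or, not_forall, not_lt, exists_prop] using h
    exact hx.not_ge ((hqc x r).ordConnected.out ⟨⟨hl₁.1, hl₁.2.trans hd.2⟩, h₁⟩
      ⟨⟨hd.1.trans hl₂.1, hl₂.2⟩, h₂⟩ ⟨hl₁.2, hl₂.1⟩).2
  obtain ⟨x, -, hxA, hxB⟩ := hconn _ _ (hopen d b hd.1 le_rfl) (hopen a d le_rfl hd.2) hcover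
    ⟨x₁, hx₁ d ⟨le_rfl, hd.2⟩, hx₁⟩ ⟨x₂, hx₂ d ⟨hd.1, le_rfl⟩, hx₂⟩
  exact ⟨x, fun l hl => (le_total l d).elim (fun h => hxB l ⟨hl.1, h⟩) fun h => hxA l ⟨h, hl.2⟩⟩

theorem exists_forall_lt_of_quasiconcaveOn {D : Set ℝ} (hab : a ≤ b)
    (hf : ContinuousOn (Function.uncurry f) (Icc a b ×ˢ univ))
    (hqc : ∀ x, QuasiconcaveOn ℝ (Icc a b) (f · x)) (hdense : Icc a b ⊆ closure D)
    (hD : ∀ d ∈ D, IsPreconnected {x | f d x < r}) (hbelow : ∀ l ∈ Icc a b, ∃ x, f l x < r) :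
    ∃ x, ∀ l ∈ Icc a b, f l x < r := by
  by_contra! habove
  set S : X → Set ℝ := fun x => {l ∈ Icc a b | r ≤ f l x}
  have hS : ∀ x, (S x).Nonempty := habove
  have hScpt : ∀ x, IsCompact (S x) := fun x => isCompact_Icc.of_isClosed_subset
    ((hf.uncurry_right x (mem_univ x)).preimage_isClosed_of_isClosed isClosed_Icc isClosed_Ici)
    fun l hl => hl.1
  have hSconn : ∀ x, (S x).OrdConnected := fun x => (hqc x r).ordConnected
  obtain ⟨x₀, -⟩ := hbelow a ⟨le_rfl, hab⟩
  have : Nonempty X := ⟨x₀⟩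
  by_cases hle : ∀ x y, sInf (S x) ≤ sSup (S y)
  · obtain ⟨t, ht⟩ := exists_forall_mem_of_csInf_le_csSup hS hScpt hSconn hle
    obtain ⟨x, hx⟩ := hbelow t (ht x₀).1
    exact hx.not_ge (ht x).2
  push Not at hle
  obtain ⟨x₂, x₁, hlt⟩ := hle
  have hsup := ((hScpt x₁).sSup_mem (hS x₁)).1
  have hinf := ((hScpt x₂).sInf_mem (hS x₂)).1
  have hmid : (sSup (S x₁) + sInf (S x₂)) / 2 ∈ Icc a b :=
    ⟨by linarith [hsup.1, hinf.1], by linarith [hsup.2, hinf.2]⟩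
  obtain ⟨d, hdI, hdD⟩ := mem_closure_iff.1 (hdense hmid) _ isOpen_Ioo
    (⟨by linarith, by linarith⟩ : _ ∈ Ioo (sSup (S x₁)) (sInf (S x₂)))
  have hd : d ∈ Icc a b := ⟨by linarith [hsup.1, hdI.1], by linarith [hinf.2, hdI.2]⟩
  obtain ⟨x, hx⟩ := exists_forall_lt_of_isPreconnected_setOf_lt hd hf hqc (hD d hdD)
    (fun l hl => lt_of_not_ge fun h =>
      (le_csSup (hScpt x₁).bddAbove ⟨⟨hd.1.trans hl.1, hl.2⟩, h⟩).not_gt (hdI.1.trans_le hl.1))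
    (fun l hl => lt_of_not_ge fun h =>
      (csInf_le (hScpt x₂).bddBelow ⟨⟨hl.1, hl.2.trans hd.2⟩, h⟩).not_gt (hl.2.trans_lt hdI.2))
  obtain ⟨l, hl, hrl⟩ := habove x
  exact (hx l hl).not_ge hrl

theorem iInf_biSup_eq_biSup_diff_iInf_of_quasiconcaveOn {D : Set ℝ} (hab : a ≤ b)
    (hf : ContinuousOn (Function.uncurry f) (Icc a b ×ˢ univ))
    (hqc : ∀ x, QuasiconcaveOn ℝ (Icc a b) (f · x)) (hdense : Icc a b ⊆ closure D)
    (hD : ∀ d ∈ D, ∀ r, IsPreconnected {x | f d x < r}) (hDbelow : ∀ d ∈ D, ∀ r, ∃ x, f d x < r) :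
    ⨅ x, ⨆ l ∈ Icc a b, (f l x : EReal) = ⨆ l ∈ Icc a b \ D, ⨅ x, (f l x : EReal) := by
  refine le_antisymm ?_ (iSup₂_le fun l hl => le_iInf fun x =>
    (iInf_le _ x).trans (le_iSup₂_of_le l hl.1 le_rfl))
  by_contra! hlt
  obtain ⟨r, hr₁, hr₂⟩ := EReal.exists_between_coe_real hlt
  have hbelow : ∀ l ∈ Icc a b, ∃ x, f l x < r := by
    intro l hl
    by_cases hlD : l ∈ D
    · exact hDbelow l hlD r
    · obtain ⟨x, hx⟩ := iInf_lt_iff.1 ((le_iSup₂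
        (f := fun l (_ : l ∈ Icc a b \ D) => ⨅ x, (f l x : EReal)) l ⟨hl, hlD⟩).trans_lt hr₁)
      exact ⟨x, EReal.coe_lt_coe_iff.1 hx⟩
  obtain ⟨x, hx⟩ :=
    exists_forall_lt_of_quasiconcaveOn hab hf hqc hdense (fun d hd => hD d hd r) hbelow
  obtain ⟨l₀, hl₀, hmax⟩ := isCompact_Icc.exists_isMaxOn (nonempty_Icc.2 hab)
    (hf.uncurry_right x (mem_univ x))
  refine lt_asymm hr₂ ((iInf_le _ x).trans_lt ?_)
  rw [hmax.biSup_coe_eq hl₀]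
  exact EReal.coe_lt_coe_iff.2 (hx l₀ hl₀)

end Minimax

theorem stmt11_general
    {X : Type*} [NormedAddCommGroup X] [NormedSpace ℝ X]
    (a b : ℝ) (hab : a < b)
    (φ : X →L[ℝ] ℝ) (ψ : X → ℝ) (L : NNReal) (hψlip : LipschitzWith L ψ)
    (α β α' β' : ℝ → ℝ)
    (hα : ContinuousOn α (Icc a b)) (hβ : ContinuousOn β (Icc a b))
    -- (i₂)
    (hα' : ∀ l ∈ Ioo a b, HasDerivAt α (α' l) l)
    (hβ' : ∀ l ∈ Ioo a b, HasDerivAt β (β' l) l)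
    (hα'c : ContinuousOn α' (Ioo a b)) (hβ'c : ContinuousOn β' (Ioo a b))
    (hα'0 : ∀ l ∈ Ioo a b, α' l ≠ 0)
    (g : ℝ → ℝ) (hg : ∀ l ∈ Ioo a b, g l = β' l / α' l)
    -- the function h : ℝ → [a,b] of Theorem 1.1
    (h : ℝ → ℝ)
    (hhmem : ∀ μ : ℝ, h μ ∈ Icc a b)
    (hhinv : ∀ μ ∈ g '' Ioo a b, h μ ∈ Ioo a b ∧ g (h μ) = μ)
    -- (i₃) or (i₄), with the corresponding boundary values of h
    (hcase :
      (StrictMonoOn g (Ioo a b) ∧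
        (∀ l ∈ Ioo a b, ∀ x : X, ψ x ≠ 0 → α' l * ψ x < 0) ∧
        (∀ μ : ℝ, (∀ l ∈ Ioo a b, μ ≤ g l) → h μ = a) ∧
        (∀ μ : ℝ, (∀ l ∈ Ioo a b, g l ≤ μ) → h μ = b)) ∨
      (StrictAntiOn g (Ioo a b) ∧
        (∀ l ∈ Ioo a b, ∀ x : X, ψ x ≠ 0 → 0 < α' l * ψ x) ∧
        (∀ μ : ℝ, (∀ l ∈ Ioo a b, g l ≤ μ) → h μ = a) ∧
        (∀ μ : ℝ, (∀ l ∈ Ioo a b, μ ≤ g l) → h μ = b)))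
    -- density of D in [a,b]
    (hdense : Icc a b ⊆ closure
      {l : ℝ | l ∈ Icc a b ∧ |β l| * (L : ℝ) < |α l| * ‖φ‖}) :
    (∀ x : X, ψ x ≠ 0 →
      (⨆ l ∈ Icc a b, ((α l * φ x + β l * ψ x : ℝ) : EReal)) =
        ((α (h (-(φ x / ψ x))) * φ x + β (h (-(φ x / ψ x))) * ψ x : ℝ) : EReal)) ∧
    (∀ x : X, ψ x = 0 →
      (⨆ l ∈ Icc a b, ((α l * φ x + β l * ψ x : ℝ) : EReal)) =
        ((max (α a * φ x) (α b * φ x) : ℝ) : EReal)) ∧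
    (⨅ x : X, ⨆ l ∈ Icc a b, ((α l * φ x + β l * ψ x : ℝ) : EReal)) =
      (⨆ l ∈ (Icc a b \ {l : ℝ | l ∈ Icc a b ∧ |β l| * (L : ℝ) < |α l| * ‖φ‖}),
        ⨅ x : X, ((α l * φ x + β l * ψ x : ℝ) : EReal)) := by
  have hgc : ContinuousOn g (Ioo a b) := (hβ'c.div hα'c hα'0).congr hg
  have hpeak : ∀ x, ψ x ≠ 0 →
      MonotoneOn (fun l => α l * φ x + β l * ψ x) (Icc a (h (-(φ x / ψ x)))) ∧
        AntitoneOn (fun l => α l * φ x + β l * ψ x) (Icc (h (-(φ x / ψ x))) b) := fun x hx =>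
    monotoneOn_antitoneOn_mul_add_mul hx (hhmem _) hα hβ hα' hβ' hα'0 hg hgc (hhinv _)
      (hcase.imp (fun ⟨hm, hs, ha, hb⟩ => ⟨hm, (hs · · x hx), ha _, hb _⟩)
        fun ⟨hm, hs, ha, hb⟩ => ⟨hm, (hs · · x hx), ha _, hb _⟩)
  refine ⟨fun x hx => ?_, fun x hx => ?_, ?_⟩
  · exact (isMaxOn_of_monotoneOn_of_antitoneOn (hhmem _) (hpeak x hx).1
      (hpeak x hx).2).biSup_coe_eq (hhmem _)
  · obtain ⟨c, hc, hmono, hanti⟩ := exists_monotoneOn_antitoneOn_mul hab.le hα hα' hα'0 (φ x)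
    simp only [hx, mul_zero, add_zero]
    exact biSup_Icc_coe_eq_max hab.le hc hmono hanti
  refine iInf_biSup_eq_biSup_diff_iInf_of_quasiconcaveOn hab.le ?_ (fun x => ?_) hdense
    (fun d hd r => φ.isPreconnected_setOf_mul_add_mul_lt hψlip hd.2 r)
    fun d hd r => φ.exists_mul_add_mul_lt hψlip hd.2 r
  · exact ((hα.comp continuousOn_fst fun p hp => hp.1).mul
      (φ.continuous.comp continuous_snd).continuousOn).add
      ((hβ.comp continuousOn_fst fun p hp => hp.1).mul
        (hψlip.continuous.comp continuous_snd).continuousOn)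
  · by_cases hx : ψ x = 0
    · obtain ⟨c, -, hmono, hanti⟩ := exists_monotoneOn_antitoneOn_mul hab.le hα hα' hα'0 (φ x)
      simp only [hx, mul_zero, add_zero]
      exact quasiconcaveOn_of_monotoneOn_of_antitoneOn hmono hanti
    · exact quasiconcaveOn_of_monotoneOn_of_antitoneOn (hpeak x hx).1 (hpeak x hx).2

/-- Theorem 3.4: X Banach, φ continuous linear, ψ L-Lipschitz, with the set
D = {λ : |β(λ)|L < |α(λ)|‖φ‖} dense in [a,b].  Then Φ has the explicit form of
Theorem 1.1 and inf Φ = sup over [a,b] \ D of the partial infima. -/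
theorem stmt11
    {X : Type*} [NormedAddCommGroup X] [NormedSpace ℝ X] [CompleteSpace X]
    (a b : ℝ) (hab : a < b)
    (φ : X →L[ℝ] ℝ) (ψ : X → ℝ) (L : NNReal) (hψlip : LipschitzWith L ψ)
    (α β α' β' : ℝ → ℝ)
    (hα : ContinuousOn α (Icc a b)) (hβ : ContinuousOn β (Icc a b))
    -- (i₂)
    (hα' : ∀ l ∈ Ioo a b, HasDerivAt α (α' l) l)
    (hβ' : ∀ l ∈ Ioo a b, HasDerivAt β (β' l) l)
    (hα'c : ContinuousOn α' (Ioo a b)) (hβ'c : ContinuousOn β' (Ioo a b))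
    (hα'0 : ∀ l ∈ Ioo a b, α' l ≠ 0)
    (g : ℝ → ℝ) (hg : ∀ l ∈ Ioo a b, g l = β' l / α' l)
    -- the function h : ℝ → [a,b] of Theorem 1.1
    (h : ℝ → ℝ)
    (hhmem : ∀ μ : ℝ, h μ ∈ Icc a b)
    (hhinv : ∀ μ ∈ g '' Ioo a b, h μ ∈ Ioo a b ∧ g (h μ) = μ)
    -- (i₃) or (i₄), with the corresponding boundary values of h
    (hcase :
      (StrictMonoOn g (Ioo a b) ∧
        (∀ l ∈ Ioo a b, ∀ x : X, ψ x ≠ 0 → α' l * ψ x < 0) ∧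
        (∀ μ : ℝ, (∀ l ∈ Ioo a b, μ ≤ g l) → h μ = a) ∧
        (∀ μ : ℝ, (∀ l ∈ Ioo a b, g l ≤ μ) → h μ = b)) ∨
      (StrictAntiOn g (Ioo a b) ∧
        (∀ l ∈ Ioo a b, ∀ x : X, ψ x ≠ 0 → 0 < α' l * ψ x) ∧
        (∀ μ : ℝ, (∀ l ∈ Ioo a b, g l ≤ μ) → h μ = a) ∧
        (∀ μ : ℝ, (∀ l ∈ Ioo a b, μ ≤ g l) → h μ = b)))
    -- density of D in [a,b]
    (hdense : Icc a b ⊆ closure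
      {l : ℝ | l ∈ Icc a b ∧ |β l| * (L : ℝ) < |α l| * ‖φ‖}) :
    (∀ x : X, ψ x ≠ 0 →
      (⨆ l ∈ Icc a b, ((α l * φ x + β l * ψ x : ℝ) : EReal)) =
        ((α (h (-(φ x / ψ x))) * φ x + β (h (-(φ x / ψ x))) * ψ x : ℝ) : EReal)) ∧
    (∀ x : X, ψ x = 0 →
      (⨆ l ∈ Icc a b, ((α l * φ x + β l * ψ x : ℝ) : EReal)) =
        ((max (α a * φ x) (α b * φ x) : ℝ) : EReal)) ∧
    (⨅ x : X, ⨆ l ∈ Icc a b, ((α l * φ x + β l * ψ x : ℝ) : EReal)) =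
      (⨆ l ∈ (Icc a b \ {l : ℝ | l ∈ Icc a b ∧ |β l| * (L : ℝ) < |α l| * ‖φ‖}),
        ⨅ x : X, ((α l * φ x + β l * ψ x : ℝ) : EReal)) :=
  stmt11_general a b hab φ ψ L hψlip α β α' β' hα hβ hα' hβ' hα'c hβ'c hα'0 g hg h hhmem hhinv hcase
    hdense
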